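/- arXiv:1708.09660 — 2 statements merged into one kernel-verified Lean document; each statement's English description precedes it below -/
import Mathlib

section
/- Let T₁, T₂, T₃, T₄ : I → Mₙ(ℂ) be differentiable with Tⱼ† = −Tⱼ for j = 1,2,3,4, satisfying the full Nahm equations, let x ∈ ℝ³ with r² ≠ 0 and x₄ ∈ ℝ, and suppose Q(z) is invertible for every z ∈ I. If v_a, v_b : I → ℂ^{2n} are differentiable solutions of the Weyl equation Δ†v = 0, then for all z ∈ I: d/dz ( v_a(z)† Q(z)⁻¹ v_b(z) ) = v_a(z)† v_b(z). -/
/-!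
Put `P = Q⁻¹` and let `A = i x₄ + 1₂⊗T₄ − (H + F)` be the Weyl operator, so that `v' = A v`.
Then `(v_a† P v_b)' = v_a† (A† P + P' + P A) v_b`, and since `P' = −P Q' P` it suffices that `Q`
solves the Riccati equation `Q' = A Q + Q A† − Q²`. Skew-adjointness of the Nahm data gives
`A† = −i x₄ − 1₂⊗T₄ − (H + F)`. The Pauli algebra turns the Nahm equations into
`[1₂⊗T₄, F] − F' = F² + 1₂⊗Σ T_j²`, and together with `H² = r²` and the fact that `H` commutes
with every `1₂⊗M`, the Riccati equation becomes a polynomial identity in `H`, `F` and `1₂⊗T₄`.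
-/

open Matrix Kronecker

noncomputable section

attribute [local instance] Matrix.normedAddCommGroup Matrix.normedSpace

/-- n×n complex matrices. -/
abbrev Mat (n : ℕ) := Matrix (Fin n) (Fin n) ℂ

/-- The Levi-Civita symbol on `Fin 3`, valued in `ℂ`. -/
def lev (i j k : Fin 3) : ℂ :=
  ((j.val : ℂ) - i.val) * ((k.val : ℂ) - j.val) * ((k.val : ℂ) - i.val) / 2

/-- The right-hand side of the full Nahm equations:
`[T₄, Tᵢ] + (1/2)·Σ_{j,k} ε_{ijk} [T_j, T_k]`. -/
def nahmRHS {n : ℕ} (T : Fin 3 → ℝ → Mat n) (T4 : ℝ → Mat n) (i : Fin 3) (z : ℝ) : Mat n :=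
  (T4 z * T i z - T i z * T4 z) +
    (1 / 2 : ℂ) • ∑ j : Fin 3, ∑ k : Fin 3, lev i j k • (T j z * T k z - T k z * T j z)

/-- 2n×2n complex matrices, indexed by `Fin 2 × Fin n`. -/
abbrev Mat2 (n : ℕ) := Matrix (Fin 2 × Fin n) (Fin 2 × Fin n) ℂ

/-- The Pauli matrices. -/
def σ : Fin 3 → Matrix (Fin 2) (Fin 2) ℂ :=
  ![!![0, 1; 1, 0], !![0, -Complex.I; Complex.I, 0], !![1, 0; 0, -1]]

/-- `r² = x₁² + x₂² + x₃²`. -/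
def r2 (x : Fin 3 → ℝ) : ℝ := ∑ j : Fin 3, x j ^ 2

/-- `H = −Σ_j x_j σ_j ⊗ 1ₙ`. -/
def Hmat (n : ℕ) (x : Fin 3 → ℝ) : Mat2 n :=
  -∑ j : Fin 3, (x j : ℂ) • (σ j ⊗ₖ (1 : Mat n))

/-- `F(z) = i·Σ_j σ_j ⊗ T_j(z)`. -/
def Fmat {n : ℕ} (T : Fin 3 → ℝ → Mat n) (z : ℝ) : Mat2 n :=
  Complex.I • ∑ j : Fin 3, σ j ⊗ₖ T j z

/-- `Q(z) = (1/r²)·H·F(z)·H − F(z)`. -/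
def Qmat {n : ℕ} (x : Fin 3 → ℝ) (T : Fin 3 → ℝ → Mat n) (z : ℝ) : Mat2 n :=
  ((r2 x : ℂ))⁻¹ • (Hmat n x * Fmat T z * Hmat n x) - Fmat T z

section Pauli

theorem σ0_mul_σ0 : σ 0 * σ 0 = 1 := by
  ext i j; fin_cases i <;> fin_cases j <;> simp [σ, mul_apply]
theorem σ1_mul_σ1 : σ 1 * σ 1 = 1 := by
  ext i j; fin_cases i <;> fin_cases j <;> simp [σ, mul_apply]
theorem σ2_mul_σ2 : σ 2 * σ 2 = 1 := by
  ext i j; fin_cases i <;> fin_cases j <;> simp [σ, mul_apply]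
theorem σ0_mul_σ1 : σ 0 * σ 1 = Complex.I • σ 2 := by
  ext i j; fin_cases i <;> fin_cases j <;> simp [σ, mul_apply]
theorem σ1_mul_σ0 : σ 1 * σ 0 = -Complex.I • σ 2 := by
  ext i j; fin_cases i <;> fin_cases j <;> simp [σ, mul_apply]
theorem σ1_mul_σ2 : σ 1 * σ 2 = Complex.I • σ 0 := by
  ext i j; fin_cases i <;> fin_cases j <;> simp [σ, mul_apply]
theorem σ2_mul_σ1 : σ 2 * σ 1 = -Complex.I • σ 0 := by
  ext i j; fin_cases i <;> fin_cases j <;> simp [σ, mul_apply]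
theorem σ2_mul_σ0 : σ 2 * σ 0 = Complex.I • σ 1 := by
  ext i j; fin_cases i <;> fin_cases j <;> simp [σ, mul_apply]
theorem σ0_mul_σ2 : σ 0 * σ 2 = -Complex.I • σ 1 := by
  ext i j; fin_cases i <;> fin_cases j <;> simp [σ, mul_apply]

theorem σ_conjTranspose (j : Fin 3) : (σ j)ᴴ = σ j := by
  fin_cases j <;> ext i k <;> fin_cases i <;> fin_cases k <;> simp [σ]

end Pauli

theorem Matrix.kronecker_sub {α l m p q : Type*} [Ring α] (A : Matrix l m α)
    (B C : Matrix p q α) : A ⊗ₖ (B - C) = A ⊗ₖ B - A ⊗ₖ C := by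
  ext; simp [mul_sub]

theorem Matrix.kronecker_neg {α l m p q : Type*} [Ring α] (A : Matrix l m α)
    (B : Matrix p q α) : A ⊗ₖ (-B) = -(A ⊗ₖ B) := by
  ext; simp

section Hmat

variable {n : ℕ} (x : Fin 3 → ℝ)

theorem Hmat_conjTranspose : (Hmat n x)ᴴ = Hmat n x := by
  simp [Hmat, conjTranspose_sum, conjTranspose_kronecker, σ_conjTranspose]

theorem Hmat_mul_self : Hmat n x * Hmat n x = (r2 x : ℂ) • (1 : Mat2 n) := by
  have hr : (r2 x : ℂ) = (x 0 : ℂ) ^ 2 + (x 1 : ℂ) ^ 2 + (x 2 : ℂ) ^ 2 := by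
    push_cast [r2, Fin.sum_univ_three]; ring
  simp only [Hmat, Fin.sum_univ_three, neg_mul, mul_neg, add_mul, mul_add,
    smul_mul_assoc, mul_smul_comm, ← mul_kronecker_mul, mul_one, σ0_mul_σ0, σ0_mul_σ1, σ0_mul_σ2,
    σ1_mul_σ0, σ1_mul_σ1, σ1_mul_σ2, σ2_mul_σ0, σ2_mul_σ1, σ2_mul_σ2, hr, smul_kronecker,
    smul_smul, ← one_kronecker_one (α := ℂ)]
  module

theorem Hmat_commute_one_kronecker (M : Mat n) :
    Commute (Hmat n x) ((1 : Matrix (Fin 2) (Fin 2) ℂ) ⊗ₖ M) := by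
  simp only [Commute, SemiconjBy, Hmat, neg_mul, mul_neg, Finset.sum_mul, Finset.mul_sum,
    smul_mul_assoc, mul_smul_comm, ← mul_kronecker_mul, one_mul, mul_one]

end Hmat

theorem half_sum_lev_smul_commutator {R : Type*} [Ring R] [Module ℂ R] (A : Fin 3 → R)
    (l : Fin 3) :
    (1 / 2 : ℂ) • ∑ j, ∑ k, lev l j k • (A j * A k - A k * A j) =
      A (l + 1) * A (l + 2) - A (l + 2) * A (l + 1) := by
  fin_cases l <;> simp only [Fin.isValue, Fin.reduceFinMk, Fin.reduceAdd] <;>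
    norm_num [Fin.sum_univ_three, lev] <;> module

theorem nahmRHS_eq {n : ℕ} (T : Fin 3 → ℝ → Mat n) (T4 : ℝ → Mat n) (l : Fin 3) (z : ℝ) :
    nahmRHS T T4 l z = T4 z * T l z - T l z * T4 z
      + (T (l + 1) z * T (l + 2) z - T (l + 2) z * T (l + 1) z) :=
  congrArg _ (half_sum_lev_smul_commutator (fun j => T j z) l)

theorem one_kronecker_commutator_Fmat_sub_Fmat_nahmRHS {n : ℕ} (T : Fin 3 → ℝ → Mat n)
    (T4 : ℝ → Mat n) (z : ℝ) :
    (1 ⊗ₖ T4 z) * Fmat T z - Fmat T z * (1 ⊗ₖ T4 z) - Fmat (nahmRHS T T4) z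
      = Fmat T z * Fmat T z + 1 ⊗ₖ ∑ j, T j z * T j z := by
  simp only [Fmat, nahmRHS_eq, Fin.sum_univ_three, smul_mul_assoc, mul_smul_comm, add_mul,
    mul_add, ← mul_kronecker_mul, one_mul, mul_one, σ0_mul_σ0, σ0_mul_σ1, σ0_mul_σ2,
    σ1_mul_σ0, σ1_mul_σ1, σ1_mul_σ2, σ2_mul_σ0, σ2_mul_σ1, σ2_mul_σ2, kronecker_add,
    kronecker_sub, smul_kronecker, smul_add, smul_sub, Fin.isValue, Fin.reduceAdd]
  match_scalars <;> simp [Complex.I_mul_I]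

theorem riccati_identity {𝕜 R : Type*} [Field 𝕜] [Ring R] [Algebra 𝕜 R] {H K M F F' : R}
    {r : 𝕜} (c : 𝕜) (hr : r ≠ 0) (hH : H * H = r • 1) (hK : Commute H K) (hM : Commute H M)
    (hF' : K * F - F * K - F' = F * F + M) :
    (c • 1 + K - (H + F)) * (r⁻¹ • (H * F * H) - F)
        + (r⁻¹ • (H * F * H) - F) * ((-c) • 1 - K - (H + F)) - (r⁻¹ • (H * F' * H) - F')
      = (r⁻¹ • (H * F * H) - F) * (r⁻¹ • (H * F * H) - F) := by
  obtain rfl : F' = K * F - F * K - (F * F + M) := by rw [← hF']; abel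
  have hHH (Y : R) : H * (H * Y) = r • Y := by rw [← mul_assoc, hH, smul_one_mul]
  simp only [mul_add, add_mul, mul_sub, sub_mul, smul_mul_assoc, mul_smul_comm, smul_sub,
    smul_add, smul_smul, mul_assoc, mul_one, one_mul, hHH, hK.left_comm, hH, hK.eq, hM.eq]
  match_scalars <;> field_simp <;> ring

theorem inv_riccati_identity {R : Type*} [Ring R] {A B Q Q' P : R} (hQP : Q * P = 1)
    (hPQ : P * Q = 1) (h : A * Q + Q * B - Q' = Q * Q) : B * P + -(P * Q' * P) + P * A = 1 :=
  calc B * P + -(P * Q' * P) + P * A = P * (A * Q + Q * B - Q') * P := by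
        simp only [mul_add, add_mul, mul_sub, sub_mul, mul_assoc, hQP, mul_one]
        simp only [← mul_assoc, hPQ, one_mul]
        abel
    _ = (P * Q) * (Q * P) := by rw [h, mul_assoc, mul_assoc, mul_assoc]
    _ = 1 := by rw [hPQ, hQP, one_mul]

section Calculus

open scoped Topology

variable {𝕜 m : Type*} [RCLike 𝕜] {z : ℝ}

theorem hasDerivAt_matrix {n : Type*} [Fintype m] [Fintype n] {f : ℝ → Matrix m n 𝕜}
    {f' : Matrix m n 𝕜} :
    HasDerivAt f f' z ↔ ∀ i j, HasDerivAt (fun w => f w i j) (f' i j) z :=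
  hasDerivAt_pi.trans (forall_congr' fun _ => hasDerivAt_pi)

theorem HasDerivAt.matrix_mul [Fintype m] {f g : ℝ → Matrix m m 𝕜} {f' g' : Matrix m m 𝕜}
    (hf : HasDerivAt f f' z) (hg : HasDerivAt g g' z) :
    HasDerivAt (fun w => f w * g w) (f' * g z + f z * g') z := by
  rw [hasDerivAt_matrix] at *
  intro i j
  simp only [Matrix.add_apply, Matrix.mul_apply, ← Finset.sum_add_distrib]
  exact HasDerivAt.fun_sum fun k _ => (hf i k).mul (hg k j)

theorem HasDerivAt.matrix_mulVec [Fintype m] {f : ℝ → Matrix m m 𝕜} {v : ℝ → m → 𝕜}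
    {f' : Matrix m m 𝕜} {v' : m → 𝕜} (hf : HasDerivAt f f' z) (hv : HasDerivAt v v' z) :
    HasDerivAt (fun w => f w *ᵥ v w) (f' *ᵥ v z + f z *ᵥ v') z := by
  rw [hasDerivAt_pi] at hv ⊢
  rw [hasDerivAt_matrix] at hf
  intro i
  simp only [Pi.add_apply, mulVec, dotProduct, ← Finset.sum_add_distrib]
  exact HasDerivAt.fun_sum fun k _ => (hf i k).mul (hv k)

theorem HasDerivAt.dotProduct [Fintype m] {u v : ℝ → m → 𝕜} {u' v' : m → 𝕜}
    (hu : HasDerivAt u u' z) (hv : HasDerivAt v v' z) :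
    HasDerivAt (fun w => u w ⬝ᵥ v w) (u' ⬝ᵥ v z + u z ⬝ᵥ v') z := by
  rw [hasDerivAt_pi] at hu hv
  simp only [_root_.dotProduct, ← Finset.sum_add_distrib]
  exact HasDerivAt.fun_sum fun k _ => (hu k).mul (hv k)

theorem HasDerivAt.matrix_inv [Fintype m] [DecidableEq m] {f : ℝ → Matrix m m 𝕜}
    {f' : Matrix m m 𝕜} (hf : HasDerivAt f f' z) (hu : IsUnit (f z)) :
    HasDerivAt (fun w => (f w)⁻¹) (-((f z)⁻¹ * f' * (f z)⁻¹)) z := by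
  have hdet : (f z).det ≠ 0 := ((isUnit_iff_isUnit_det _).mp hu).ne_zero
  have hinv : ContinuousAt (fun w => (f w)⁻¹) z := by
    refine (continuousAt_matrix_inv _ ?_).comp hf.continuousAt
    simpa only [Ring.inverse_eq_inv'] using continuousAt_inv₀ hdet
  have hunit : ∀ᶠ w in 𝓝 z, IsUnit (f w) := by
    filter_upwards [(continuous_id.matrix_det.continuousAt.comp hf.continuousAt).eventually_ne
      hdet] with w hw
    exact (isUnit_iff_isUnit_det _).mpr (isUnit_iff_ne_zero.mpr hw)
  -- `A⁻¹ - B⁻¹ = -A⁻¹ (A - B) B⁻¹` turns the slope of `f⁻¹` into a product of convergent factors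
  have hslope : (fun w => -((f w)⁻¹ * slope f z w * (f z)⁻¹)) =ᶠ[𝓝[≠] z]
      slope (fun w => (f w)⁻¹) z := by
    filter_upwards [nhdsWithin_le_nhds hunit] with w hw
    have hdiff : (f w)⁻¹ - (f z)⁻¹ = -((f w)⁻¹ * (f w - f z) * (f z)⁻¹) := by
      rw [mul_sub, sub_mul, nonsing_inv_mul _ ((isUnit_iff_isUnit_det _).mp hw), one_mul,
        mul_assoc, mul_nonsing_inv _ ((isUnit_iff_isUnit_det _).mp hu), mul_one, neg_sub]
    simp only [slope_def_module, hdiff, Matrix.mul_smul, Matrix.smul_mul, smul_neg]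
  refine hasDerivAt_iff_tendsto_slope.mpr ?_
  exact ((((hinv.tendsto.mono_left nhdsWithin_le_nhds).mul
    (hasDerivAt_iff_tendsto_slope.mp hf)).mul_const _).neg).congr' hslope

theorem HasDerivAt.const_kronecker [Fintype m] {l : Type*} [Fintype l] (B : Matrix l l 𝕜)
    {g : ℝ → Matrix m m 𝕜} {g' : Matrix m m 𝕜} (hg : HasDerivAt g g' z) :
    HasDerivAt (fun w => B ⊗ₖ g w) (B ⊗ₖ g') z := by
  rw [hasDerivAt_matrix] at hg ⊢
  rintro ⟨a, i⟩ ⟨b, k⟩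
  exact (hg i k).const_mul (B a b)

theorem HasDerivAt.star_dotProduct_mulVec [Fintype m] {A M' : Matrix m m 𝕜}
    {M : ℝ → Matrix m m 𝕜} {u v : ℝ → m → 𝕜} (hM : HasDerivAt M M' z)
    (hu : HasDerivAt u (A *ᵥ u z) z) (hv : HasDerivAt v (A *ᵥ v z) z) :
    HasDerivAt (fun w => star (u w) ⬝ᵥ (M w *ᵥ v w))
      (star (u z) ⬝ᵥ ((Aᴴ * M z + M' + M z * A) *ᵥ v z)) z := by
  refine (hu.star.dotProduct (hM.matrix_mulVec hv)).congr_deriv ?_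
  rw [star_mulVec, ← dotProduct_mulVec, ← dotProduct_add, add_mulVec, add_mulVec, mulVec_mulVec,
    mulVec_mulVec, add_assoc]

end Calculus

section Weyl

variable {n : ℕ}

theorem Fmat_conjTranspose {T : Fin 3 → ℝ → Mat n} {z : ℝ} (hT : ∀ j, (T j z)ᴴ = -T j z) :
    (Fmat T z)ᴴ = Fmat T z := by
  simp [Fmat, conjTranspose_sum, conjTranspose_kronecker, σ_conjTranspose, hT, kronecker_neg]

theorem weyl_conjTranspose (x : Fin 3 → ℝ) (x4 : ℝ) {T : Fin 3 → ℝ → Mat n} {T4 : ℝ → Mat n}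
    {z : ℝ} (hT : ∀ j, (T j z)ᴴ = -T j z) (hT4 : (T4 z)ᴴ = -T4 z) :
    ((Complex.I * (x4 : ℂ)) • (1 : Mat2 n) + (1 : Matrix (Fin 2) (Fin 2) ℂ) ⊗ₖ T4 z
        - (Hmat n x + Fmat T z))ᴴ
      = (-(Complex.I * (x4 : ℂ))) • (1 : Mat2 n) - (1 : Matrix (Fin 2) (Fin 2) ℂ) ⊗ₖ T4 z
        - (Hmat n x + Fmat T z) := by
  simp [Fmat_conjTranspose hT, Hmat_conjTranspose, conjTranspose_kronecker, hT4, kronecker_neg,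
    sub_eq_add_neg]

theorem hasDerivAt_Fmat {T T' : Fin 3 → ℝ → Mat n} {z : ℝ}
    (hT : ∀ j, HasDerivAt (T j) (T' j z) z) : HasDerivAt (Fmat T) (Fmat T' z) z :=
  (HasDerivAt.fun_sum fun j _ => (hT j).const_kronecker (σ j)).const_smul Complex.I

theorem hasDerivAt_Qmat (x : Fin 3 → ℝ) {T T' : Fin 3 → ℝ → Mat n} {z : ℝ}
    (hT : ∀ j, HasDerivAt (T j) (T' j z) z) : HasDerivAt (Qmat x T) (Qmat x T' z) z := by
  have hF := hasDerivAt_Fmat hT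
  have hH := hasDerivAt_const z (Hmat n x)
  exact ((((hH.matrix_mul hF).matrix_mul hH).const_smul ((r2 x : ℂ))⁻¹).sub hF).congr_deriv
    (by simp [Qmat])

end Weyl

/-- Panagopoulos antiderivative `∫ v_a† v_b dz = v_a† Q⁻¹ v_b`: with skew-adjoint
Nahm data, `r² ≠ 0`, `Q(z)` invertible, and `v_a, v_b` solutions of the Weyl equation
`dv/dz = [i x₄ + 1₂⊗T₄ − (H+F)]v`, one has `d/dz (v_a† Q⁻¹ v_b) = v_a† v_b` on `I`. -/
theorem panagopoulos_antiderivative_norm {n : ℕ} (I : Set ℝ) (T1 T2 T3 T4 : ℝ → Mat n)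
    (hsk1 : ∀ z ∈ I, (T1 z)ᴴ = -T1 z) (hsk2 : ∀ z ∈ I, (T2 z)ᴴ = -T2 z)
    (hsk3 : ∀ z ∈ I, (T3 z)ᴴ = -T3 z) (hsk4 : ∀ z ∈ I, (T4 z)ᴴ = -T4 z)
    (hnahm : ∀ z ∈ I, ∀ i : Fin 3,
      HasDerivAt (![T1, T2, T3] i) (nahmRHS ![T1, T2, T3] T4 i z) z)
    (x : Fin 3 → ℝ) (hx : r2 x ≠ 0) (x4 : ℝ)
    (hQ : ∀ z ∈ I, IsUnit (Qmat x ![T1, T2, T3] z))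
    (va vb : ℝ → (Fin 2 × Fin n) → ℂ)
    (hva : ∀ z ∈ I, HasDerivAt va
      ((((Complex.I * (x4 : ℂ)) • (1 : Mat2 n)
          + (1 : Matrix (Fin 2) (Fin 2) ℂ) ⊗ₖ T4 z
          - (Hmat n x + Fmat ![T1, T2, T3] z))) *ᵥ va z) z)
    (hvb : ∀ z ∈ I, HasDerivAt vb
      ((((Complex.I * (x4 : ℂ)) • (1 : Mat2 n)
          + (1 : Matrix (Fin 2) (Fin 2) ℂ) ⊗ₖ T4 z
          - (Hmat n x + Fmat ![T1, T2, T3] z))) *ᵥ vb z) z) :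
    ∀ z ∈ I, HasDerivAt
      (fun w => star (va w) ⬝ᵥ ((Qmat x ![T1, T2, T3] w)⁻¹ *ᵥ vb w))
      (star (va z) ⬝ᵥ vb z) z := by
  intro z hz
  set T : Fin 3 → ℝ → Mat n := ![T1, T2, T3]
  have hskew : ∀ j, (T j z)ᴴ = -T j z := by
    intro j
    fin_cases j
    exacts [hsk1 z hz, hsk2 z hz, hsk3 z hz]
  have hriccati := riccati_identity (Complex.I * x4) (Complex.ofReal_ne_zero.mpr hx)
    (Hmat_mul_self x) (Hmat_commute_one_kronecker x (T4 z)) (Hmat_commute_one_kronecker x _)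
    (one_kronecker_commutator_Fmat_sub_Fmat_nahmRHS T T4 z)
  rw [← weyl_conjTranspose x x4 hskew (hsk4 z hz)] at hriccati
  have hdet := (isUnit_iff_isUnit_det _).mp (hQ z hz)
  have hinv := inv_riccati_identity (Q' := Qmat x (nahmRHS T T4) z) (mul_nonsing_inv _ hdet)
    (nonsing_inv_mul _ hdet) hriccati
  have hQinv := (hasDerivAt_Qmat x (hnahm z hz)).matrix_inv (hQ z hz)
  have hprod := hQinv.star_dotProduct_mulVec (hva z hz) (hvb z hz)
  rwa [hinv, one_mulVec] at hprod
end
end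

section
/- Let L, M : I → Mₙ(ℂ) with L differentiable and satisfying the Lax equation dL/dz = L M − M L on a real interval I, let η ∈ ℂ, and suppose L(z) − η·1ₙ is invertible for every z ∈ I. Then the adjugate matrix satisfies d/dz adj(L(z) − η·1ₙ) = [adj(L(z) − η·1ₙ), M(z)] on I. -/
/-!
Differentiating `A * adj A = det A • 1` gives `A' * adj A + A * (adj A)' = tr (adj A * A') • 1`
(Jacobi's formula for `det'`). For `A' = A * M - M * A` the trace vanishes because `adj A`
commutes with `A`, which leaves `A * (adj A)' = A * (adj A * M - M * adj A)`; since `A` is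
invertible it cancels.
-/

open Matrix

noncomputable section

attribute [local instance] Matrix.normedAddCommGroup Matrix.normedSpace

section Algebra

variable {n R : Type*} [Fintype n] [DecidableEq n] [CommRing R]

theorem trace_adjugate_mul_eq_sum_det_updateCol (A B : Matrix n n R) :
    trace (adjugate A * B) = ∑ i, (A.updateCol i fun k => B k i).det := by
  simp only [← cramer_apply, cramer_eq_adjugate_mulVec, trace, diag, mul_apply, mulVec,
    dotProduct]

theorem det_updateCol_eq_sum_perm (A : Matrix n n R) (i : n) (b : n → R) :
    (A.updateCol i b).det = ∑ σ : Equiv.Perm n,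
      Equiv.Perm.sign σ • ((∏ j ∈ Finset.univ.erase i, A (σ j) j) * b (σ i)) := by
  rw [det_apply]
  refine Finset.sum_congr rfl fun σ _ => ?_
  rw [← Finset.prod_erase_mul _ _ (Finset.mem_univ i)]
  congr 2
  · exact Finset.prod_congr rfl fun j hj => by rw [updateCol_ne (Finset.ne_of_mem_erase hj)]
  · simp

theorem trace_adjugate_mul_commutator (A M : Matrix n n R) :
    trace (adjugate A * (A * M - M * A)) = 0 := by
  rw [mul_sub, trace_sub, ← mul_assoc, ← mul_assoc, adjugate_mul, trace_mul_comm _ A,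
    ← mul_assoc, mul_adjugate, smul_one_mul, sub_self]

end Algebra

section Calculus

variable {𝕜 : Type*} [NontriviallyNormedField 𝕜] {R : Type*} [NormedCommRing R]
  [NormedAlgebra 𝕜 R] {m n p : Type*} {z : 𝕜}

theorem hasDerivAt_matrix_iff [Fintype m] [Fintype n] {A : 𝕜 → Matrix m n R}
    {A' : Matrix m n R} :
    HasDerivAt A A' z ↔ ∀ i j, HasDerivAt (fun w => A w i j) (A' i j) z :=
  hasDerivAt_pi.trans (forall_congr' fun _ => hasDerivAt_pi)

theorem HasDerivAt.matrix_mul_s16 [Fintype m] [Fintype n] [Fintype p] {A : 𝕜 → Matrix m n R}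
    {B : 𝕜 → Matrix n p R} {A' : Matrix m n R} {B' : Matrix n p R} (hA : HasDerivAt A A' z)
    (hB : HasDerivAt B B' z) :
    HasDerivAt (fun w => A w * B w) (A' * B z + A z * B') z := by
  rw [hasDerivAt_matrix_iff] at hA hB ⊢
  intro i j
  simp only [Matrix.add_apply, mul_apply, ← Finset.sum_add_distrib]
  exact HasDerivAt.fun_sum fun k _ => (hA i k).mul (hB k j)

theorem HasDerivAt.matrix_updateRow [Fintype m] [Fintype n] [DecidableEq m]
    {A : 𝕜 → Matrix m n R} {A' : Matrix m n R} (hA : HasDerivAt A A' z) (i : m) (v : n → R) :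
    HasDerivAt (fun w => (A w).updateRow i v) (A'.updateRow i 0) z := by
  rw [hasDerivAt_matrix_iff] at hA ⊢
  intro k j
  by_cases hk : k = i
  · simpa [hk] using hasDerivAt_const z (v j)
  · simpa [hk] using hA k j

variable [Fintype n] [DecidableEq n]

theorem HasDerivAt.matrix_det {A : 𝕜 → Matrix n n R} {A' : Matrix n n R}
    (hA : HasDerivAt A A' z) :
    HasDerivAt (fun w => (A w).det) (trace (adjugate (A z) * A')) z := by
  rw [hasDerivAt_matrix_iff] at hA
  simp only [trace_adjugate_mul_eq_sum_det_updateCol, det_updateCol_eq_sum_perm]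
  rw [Finset.sum_comm]
  simp only [det_apply, ← Finset.smul_sum]
  exact HasDerivAt.fun_sum fun σ _ =>
    (HasDerivAt.fun_finsetProd fun i _ => hA (σ i) i).const_smul _

theorem DifferentiableAt.matrix_adjugate {A : 𝕜 → Matrix n n R}
    (hA : DifferentiableAt 𝕜 A z) : DifferentiableAt 𝕜 (fun w => adjugate (A w)) z := by
  refine differentiableAt_pi.2 fun i => differentiableAt_pi.2 fun j => ?_
  simp only [adjugate_apply]
  exact (hA.hasDerivAt.matrix_updateRow j (Pi.single i 1)).matrix_det.differentiableAt

theorem HasDerivAt.mul_adjugate_add_mul_deriv {A : 𝕜 → Matrix n n R} {A' D : Matrix n n R}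
    (hA : HasDerivAt A A' z) (hD : HasDerivAt (fun w => adjugate (A w)) D z) :
    A' * adjugate (A z) + A z * D = trace (adjugate (A z) * A') • (1 : Matrix n n R) := by
  have hprod := hA.matrix_mul_s16 hD
  simp only [mul_adjugate] at hprod
  have hdet : HasDerivAt (fun w => (A w).det • (1 : Matrix n n R))
      (trace (adjugate (A z) * A') • (1 : Matrix n n R)) z :=
    hasDerivAt_matrix_iff.2 fun i j => by
      simpa only [Matrix.smul_apply, smul_eq_mul] using
        hA.matrix_det.mul_const ((1 : Matrix n n R) i j)
  exact hprod.unique hdet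

theorem HasDerivAt.matrix_adjugate_of_commutator {A : 𝕜 → Matrix n n R} {M : Matrix n n R}
    (hA : HasDerivAt A (A z * M - M * A z) z) (hunit : IsUnit (A z)) :
    HasDerivAt (fun w => adjugate (A w)) (adjugate (A z) * M - M * adjugate (A z)) z := by
  obtain ⟨D, hD⟩ : ∃ D, HasDerivAt (fun w => adjugate (A w)) D z :=
    ⟨_, hA.differentiableAt.matrix_adjugate.hasDerivAt⟩
  have key := hA.mul_adjugate_add_mul_deriv hD
  rw [trace_adjugate_mul_commutator, zero_smul] at key
  have hAD : A z * D = -((A z * M - M * A z) * adjugate (A z)) :=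
    eq_neg_of_add_eq_zero_right key
  suffices h : D = adjugate (A z) * M - M * adjugate (A z) by rwa [h] at hD
  refine hunit.mul_left_cancel ?_
  rw [hAD, sub_mul, mul_sub, ← mul_assoc, mul_adjugate, mul_assoc M, mul_adjugate, smul_one_mul,
    mul_smul_one, mul_assoc]
  abel

end Calculus

/-- if `L` satisfies the Lax equation `dL/dz = LM − ML` on `I` and `L(z) − η·1ₙ`
is invertible on `I`, then `d/dz adj(L − η·1ₙ) = [adj(L − η·1ₙ), M]` on `I`. -/
theorem lax_adjugate_evolution {n : ℕ} (I : Set ℝ) (L M : ℝ → Mat n)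
    (hLax : ∀ z ∈ I, HasDerivAt L (L z * M z - M z * L z) z)
    (η : ℂ) (hinv : ∀ z ∈ I, IsUnit (L z - η • (1 : Mat n))) :
    ∀ z ∈ I, HasDerivAt (fun w => (L w - η • (1 : Mat n)).adjugate)
      ((L z - η • (1 : Mat n)).adjugate * M z - M z * (L z - η • (1 : Mat n)).adjugate) z := by
  intro z hz
  refine HasDerivAt.matrix_adjugate_of_commutator ?_ (hinv z hz)
  rw [sub_mul, mul_sub, smul_one_mul, mul_smul_one, sub_sub_sub_cancel_right]
  exact (hLax z hz).sub_const _
end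
end
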